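/- arXiv:1804.05333 — 3 statements merged into one kernel-verified Lean document; each statement's English description precedes it below -/
import Mathlib

section
/- Let a > 0, χ > 0 and b > b₊(a) := ((1+a)/2)·(√(1+χ²·a) − 1), and let n ∈ ℕ. Define the quadratic form Q on ℝⁿ × ℝⁿ by Q(U,V) := 4[((a+1)/a)·‖U‖² + (b/a + χ(a+1)/2)·⟨U,V⟩ + (1/4)·(b²/a + b + χ·b)·‖V‖²]. Then there exists a constant C > 0 (depending only on a, b, χ) such that Q(U,V) ≥ C·(‖U‖² + ‖V‖²) for all U, V ∈ ℝⁿ. -/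
/-- Abstract coercivity for a 2×2 quadratic form with positive discriminant. -/
lemma quad_coercive_aux (α β γ : ℝ) (hα : 0 < α) (hγ : 0 < γ) (hβ : 0 < β)
    (hD : β ^ 2 < 4 * α * γ) :
    ∃ C : ℝ, 0 < C ∧ ∀ x y t : ℝ, 0 ≤ x → 0 ≤ y → -(x * y) ≤ t →
      C * (x ^ 2 + y ^ 2) ≤ α * x ^ 2 + β * t + γ * y ^ 2 := by
  refine ⟨(4 * α * γ - β ^ 2) / (4 * (α + γ)), div_pos (by linarith) (by positivity), ?_⟩
  set C := (4 * α * γ - β ^ 2) / (4 * (α + γ)) with hC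
  have hCsum : C * (4 * (α + γ)) = 4 * α * γ - β ^ 2 := by
    rw [hC]; field_simp
  have hCα : C < α := by nlinarith [sq_nonneg β, sq_nonneg α]
  have hCγ : C < γ := by nlinarith [sq_nonneg β, sq_nonneg γ]
  have h4 : 4 * (α - C) * (γ - C) ≥ β ^ 2 := by nlinarith [sq_nonneg C]
  intro x y t hx hy ht
  have hαC : 0 < α - C := by linarith
  nlinarith [sq_nonneg (2 * (α - C) * x - β * y),
    mul_nonneg (sub_nonneg.mpr h4) (sq_nonneg y),
    mul_le_mul_of_nonneg_left ht (le_of_lt hβ),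
    mul_nonneg hx hy]

/-- The quadratic form
`Q(U,V) = 4[((a+1)/a)‖U‖² + (b/a + χ(a+1)/2)⟨U,V⟩ + (1/4)(b²/a + b + χb)‖V‖²]`
on `ℝⁿ × ℝⁿ`. -/
noncomputable def Qform (n : ℕ) (a b χ : ℝ) (U V : EuclideanSpace ℝ (Fin n)) : ℝ :=
  4 * (((a + 1) / a) * ‖U‖ ^ 2 + (b / a + χ * (a + 1) / 2) * (inner ℝ U V : ℝ)
        + (1 / 4) * (b ^ 2 / a + b + χ * b) * ‖V‖ ^ 2)

/-- If `a > 0`, `χ > 0` and `b > b₊(a) = ((1+a)/2)·(√(1+χ²·a) − 1)`, then the quadratic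
form `Q` is coercive: `Q(U,V) ≥ C(‖U‖² + ‖V‖²)` for some constant `C > 0`. -/
theorem Qform_coercive (n : ℕ) (a b χ : ℝ) (ha : 0 < a) (hχ : 0 < χ)
    (hb : b > ((1 + a) / 2) * (Real.sqrt (1 + χ ^ 2 * a) - 1)) :
    ∃ C : ℝ, 0 < C ∧ ∀ U V : EuclideanSpace ℝ (Fin n),
      Qform n a b χ U V ≥ C * (‖U‖ ^ 2 + ‖V‖ ^ 2) := by
  set s := Real.sqrt (1 + χ ^ 2 * a) with hs
  have hs0 : 0 ≤ s := Real.sqrt_nonneg _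
  have hs2 : s ^ 2 = 1 + χ ^ 2 * a := by
    rw [hs, Real.sq_sqrt]; positivity
  have hs1 : 1 < s := by nlinarith [mul_pos (mul_pos hχ hχ) ha]
  have hbpos : 0 < b := by nlinarith
  have h1 : (1 + a) * s < 2 * b + (1 + a) := by nlinarith
  have h1' : ((1 + a) * s) ^ 2 < (2 * b + (1 + a)) ^ 2 := by
    have h0 : 0 ≤ (1 + a) * s := by positivity
    nlinarith
  have key : 0 < 4 * b ^ 2 + 4 * (a + 1) * b - a * χ ^ 2 * (a + 1) ^ 2 := by
    nlinarith [h1', hs2]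
  set α := 4 * (a + 1) / a with hα
  set β := 4 * (b / a + χ * (a + 1) / 2) with hβdef
  set γ := b ^ 2 / a + b + χ * b with hγ
  have hαpos : 0 < α := by positivity
  have hγpos : 0 < γ := by positivity
  have hβpos : 0 < β := by positivity
  have hDval : 4 * α * γ - β ^ 2 =
      (4 / a) * (4 * b ^ 2 + 4 * (a + 1) * b - a * χ ^ 2 * (a + 1) ^ 2) := by
    rw [hα, hβdef, hγ]; field_simp; ring
  have hD : β ^ 2 < 4 * α * γ := by
    have : 0 < 4 * α * γ - β ^ 2 := by rw [hDval]; positivity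
    linarith
  obtain ⟨C, hCpos, hCle⟩ := quad_coercive_aux α β γ hαpos hγpos hβpos hD
  refine ⟨C, hCpos, fun U V => ?_⟩
  have ht : -(‖U‖ * ‖V‖) ≤ (inner ℝ U V : ℝ) :=
    neg_le_of_abs_le (abs_real_inner_le_norm U V)
  have hQ : Qform n a b χ U V = α * ‖U‖ ^ 2 + β * (inner ℝ U V : ℝ) + γ * ‖V‖ ^ 2 := by
    rw [Qform, hα, hβdef, hγ]; ring
  rw [hQ, ge_iff_le]
  exact hCle ‖U‖ ‖V‖ _ (norm_nonneg _) (norm_nonneg _) ht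
end

section
/- Let a > 0, χ > 0 and b > b₊(a) := ((1+a)/2)·(√(1+χ²·a) − 1), and let n ∈ ℕ. Then the quadratic form Q on ℝⁿ × ℝⁿ defined by Q(U,V) := 4[((a+1)/a)·‖U‖² + (b/a + χ(a+1)/2)·⟨U,V⟩ + (1/4)·(b²/a + b + χ·b)·‖V‖²] is strictly convex: for all (U₁,V₁) ≠ (U₂,V₂) in ℝⁿ × ℝⁿ and all t ∈ (0,1), Q(t·U₁ + (1−t)·U₂, t·V₁ + (1−t)·V₂) < t·Q(U₁,V₁) + (1−t)·Q(U₂,V₂). -/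
lemma Qform_combo (n : ℕ) (a b χ t : ℝ) (U₁ V₁ U₂ V₂ : EuclideanSpace ℝ (Fin n)) :
    Qform n a b χ (t • U₁ + (1 - t) • U₂) (t • V₁ + (1 - t) • V₂)
      = t * Qform n a b χ U₁ V₁ + (1 - t) * Qform n a b χ U₂ V₂
        - t * (1 - t) * Qform n a b χ (U₁ - U₂) (V₁ - V₂) := by
  simp only [Qform, ← real_inner_self_eq_norm_sq]
  simp only [inner_add_left, inner_add_right, inner_sub_left, inner_sub_right,
    real_inner_smul_left, real_inner_smul_right]
  rw [real_inner_comm U₂ U₁, real_inner_comm V₂ V₁]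
  ring

lemma quad_pos (α c d x y p : ℝ) (hα : 0 < α) (hD : c ^ 2 < 4 * α * d)
    (hxn : 0 ≤ x) (hyn : 0 ≤ y) (h1 : -(x * y) ≤ p) (h2 : p ≤ x * y)
    (hxy : 0 < x ∨ 0 < y) : 0 < α * x ^ 2 + c * p + d * y ^ 2 := by
  rcases eq_or_lt_of_le hyn with hy0 | hy0
  · have hx0 : 0 < x := by
      rcases hxy with h | h
      · exact h
      · linarith
    have hp0 : p = 0 := by rw [← hy0] at h1 h2; simp at h1 h2; linarith
    rw [← hy0, hp0]
    nlinarith [mul_pos hα (mul_pos hx0 hx0)]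
  · rcases le_or_gt 0 c with hcs | hcs
    · have hcp : 0 ≤ c * (p + x * y) := mul_nonneg hcs (by linarith)
      nlinarith [sq_nonneg (2 * α * x - c * y), mul_pos hy0 hy0,
        mul_pos (mul_pos hy0 hy0) (show (0:ℝ) < 4 * α * d - c ^ 2 by linarith)]
    · have hcp : 0 ≤ (-c) * (x * y - p) := mul_nonneg (by linarith) (by linarith)
      nlinarith [sq_nonneg (2 * α * x + c * y), mul_pos hy0 hy0,
        mul_pos (mul_pos hy0 hy0) (show (0:ℝ) < 4 * α * d - c ^ 2 by linarith)]

lemma Qform_pos (n : ℕ) (a b χ : ℝ) (ha : 0 < a) (hχ : 0 < χ)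
    (hb : b > ((1 + a) / 2) * (Real.sqrt (1 + χ ^ 2 * a) - 1))
    (X Y : EuclideanSpace ℝ (Fin n)) (h : X ≠ 0 ∨ Y ≠ 0) :
    0 < Qform n a b χ X Y := by
  set s := Real.sqrt (1 + χ ^ 2 * a) with hs
  have hsq : s ^ 2 = 1 + χ ^ 2 * a := Real.sq_sqrt (by positivity)
  have hs0 : 0 ≤ s := Real.sqrt_nonneg _
  clear_value s
  have hs1 : 1 < s := by
    nlinarith [mul_pos (mul_pos hχ hχ) ha]
  have ha1 : (0:ℝ) < 1 + a := by linarith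
  have hsm : (0:ℝ) < s - 1 := by linarith
  have hb0 : 0 < b := lt_trans (by nlinarith [mul_pos ha1 hsm]) hb
  have he : 0 < 2 * b + (a + 1) - (1 + a) * s := by nlinarith
  have hf : 0 < 2 * b + (a + 1) + (1 + a) * s := by nlinarith
  have key : ((1 + a) * s) ^ 2 < (2 * b + (a + 1)) ^ 2 := by nlinarith [mul_pos he hf]
  have hss : ((1 + a) * s) ^ 2 = (1 + a) ^ 2 * (1 + χ ^ 2 * a) := by rw [mul_pow, hsq]
  have key2 : (1 + a) ^ 2 * (1 + χ ^ 2 * a) < (2 * b + (a + 1)) ^ 2 := hss ▸ key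
  -- discriminant condition (denominator-free):
  set c : ℝ := b + a * χ * (a + 1) / 2 with hc
  set d : ℝ := (b ^ 2 + a * b + χ * a * b) / 4 with hd
  have hD : c ^ 2 < 4 * (a + 1) * d := by
    have h4 : χ ^ 2 * a * (a + 1) ^ 2 < 4 * b ^ 2 + 4 * b * (a + 1) := by nlinarith [key2]
    have := mul_pos ha (show (0:ℝ) < 4 * b ^ 2 + 4 * b * (a + 1) - χ ^ 2 * a * (a + 1) ^ 2
      by linarith)
    rw [hc, hd]; nlinarith [this]
  set x : ℝ := ‖X‖ with hx
  set y : ℝ := ‖Y‖ with hy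
  set p : ℝ := (inner ℝ X Y : ℝ) with hp
  clear_value c d
  have hxn : 0 ≤ x := norm_nonneg X
  have hyn : 0 ≤ y := norm_nonneg Y
  obtain ⟨h1', h2'⟩ := abs_le.mp (abs_real_inner_le_norm X Y)
  have h1 : -(x * y) ≤ p := by rw [hx, hy, hp]; exact h1'
  have h2 : p ≤ x * y := by rw [hx, hy, hp]; exact h2'
  have hQ : Qform n a b χ X Y = (4 / a) * ((a + 1) * x ^ 2 + c * p + d * y ^ 2) := by
    simp only [Qform, ← hx, ← hy, ← hp, hc, hd]
    field_simp
  clear_value x y p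
  rw [hQ]
  have hE : 0 < (a + 1) * x ^ 2 + c * p + d * y ^ 2 := by
    have hxy : 0 < x ∨ 0 < y := by
      rcases h with hX0 | hY0
      · exact Or.inl (by rw [hx]; exact norm_pos_iff.mpr hX0)
      · exact Or.inr (by rw [hy]; exact norm_pos_iff.mpr hY0)
    exact quad_pos (a + 1) c d x y p (by linarith) (by linarith) hxn hyn h1 h2 hxy
  have h4a : 0 < 4 / a := by positivity
  exact mul_pos h4a hE

/-- If `a > 0`, `χ > 0` and `b > b₊(a) = ((1+a)/2)·(√(1+χ²·a) − 1)`, then the quadratic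
form `Q` is strictly convex on `ℝⁿ × ℝⁿ`. -/
theorem Qform_strictConvex (n : ℕ) (a b χ : ℝ) (ha : 0 < a) (hχ : 0 < χ)
    (hb : b > ((1 + a) / 2) * (Real.sqrt (1 + χ ^ 2 * a) - 1)) :
    ∀ U₁ V₁ U₂ V₂ : EuclideanSpace ℝ (Fin n), (U₁, V₁) ≠ (U₂, V₂) →
      ∀ t : ℝ, t ∈ Set.Ioo (0 : ℝ) 1 →
        Qform n a b χ (t • U₁ + (1 - t) • U₂) (t • V₁ + (1 - t) • V₂)
          < t * Qform n a b χ U₁ V₁ + (1 - t) * Qform n a b χ U₂ V₂ := by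
  intro U₁ V₁ U₂ V₂ hne t ht
  obtain ⟨ht0, ht1⟩ := ht
  have hsub : U₁ - U₂ ≠ 0 ∨ V₁ - V₂ ≠ 0 := by
    by_contra hcon
    push_neg at hcon
    obtain ⟨h1, h2⟩ := hcon
    exact hne (by rw [Prod.ext_iff]; exact ⟨sub_eq_zero.mp h1, sub_eq_zero.mp h2⟩)
  have hpos := Qform_pos n a b χ ha hχ hb (U₁ - U₂) (V₁ - V₂) hsub
  rw [Qform_combo n a b χ t U₁ V₁ U₂ V₂]
  have h3 : 0 < t * (1 - t) * Qform n a b χ (U₁ - U₂) (V₁ - V₂) :=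
    mul_pos (mul_pos ht0 (by linarith)) hpos
  linarith
end

section
/- Let n ∈ ℕ, χ > 0, a > 0, b > 0, k ≥ 1, let Ω ⊆ ℝⁿ be open and I ⊆ ℝ an open interval, and let u, v : I × Ω → ℝ be strictly positive functions, C¹ in time and C² in space (with all displayed derivatives continuous), satisfying on I × Ω: ∂ₜu = ∇·(∇u − χ·(u/v)·∇v) and ∂ₜv = Δv − v + u/(1 + u/k). Then at every point of I × Ω: ∂ₜ(u^{−a}·v^{−b}) = −4·[ ((a+1)/a)·|∇(u^{−a/2}v^{−b/2})|² + (b/a + χ(a+1)/2)·∇(u^{−a/2}v^{−b/2})·(u^{−a/2}v^{−b/2−1}∇v) + (1/4)·(b²/a + b + χb)·|u^{−a/2}v^{−b/2−1}∇v|² ] + ∇·[ ∇(u^{−a}v^{−b}) + χ·a·u^{−a}v^{−b−1}∇v ] + b·u^{−a}v^{−b} − b·(u^{−a+1}/(1 + u/k))·v^{−b−1}. -/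
open Real

/-- Spatial divergence of a vector field on `EuclideanSpace ℝ (Fin n)`. -/
noncomputable def spatialDiv (n : ℕ)
    (f : EuclideanSpace ℝ (Fin n) → EuclideanSpace ℝ (Fin n))
    (x : EuclideanSpace ℝ (Fin n)) : ℝ :=
  ∑ i : Fin n, fderiv ℝ f x (EuclideanSpace.single i 1) i

/-- Laplacian of a scalar field on `EuclideanSpace ℝ (Fin n)`. -/
noncomputable def spatialLaplacian (n : ℕ)
    (f : EuclideanSpace ℝ (Fin n) → ℝ) (x : EuclideanSpace ℝ (Fin n)) : ℝ :=
  spatialDiv n (gradient f) x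

set_option maxHeartbeats 1000000

section KShelpers
open InnerProductSpace
variable {n : ℕ}
local notation "E" => EuclideanSpace ℝ (Fin n)

lemma KS_hasGradientAt_CFpGq {f g : E → ℝ} {y : E} (C p q : ℝ)
    (hf : DifferentiableAt ℝ f y) (hg : DifferentiableAt ℝ g y)
    (hfy : f y ≠ 0) (hgy : g y ≠ 0) :
    HasGradientAt (fun z => C * (f z ^ p * g z ^ q))
      ((C * (p * f y ^ (p-1) * g y ^ q)) • gradient f y
        + (C * (q * f y ^ p * g y ^ (q-1))) • gradient g y) y := by
  have Hf := (hf.hasFDerivAt.rpow_const (p := p) (Or.inl hfy))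
  have Hg := (hg.hasFDerivAt.rpow_const (p := q) (Or.inl hgy))
  have H := (Hf.mul Hg).const_mul C
  rw [hasFDerivAt_iff_hasGradientAt] at H
  convert H using 2
  · rfl
  simp only [gradient, map_smul, map_add]
  module

lemma KS_hasGradientAt_FpGq {f g : E → ℝ} {y : E} (p q : ℝ)
    (hf : DifferentiableAt ℝ f y) (hg : DifferentiableAt ℝ g y)
    (hfy : f y ≠ 0) (hgy : g y ≠ 0) :
    HasGradientAt (fun z => f z ^ p * g z ^ q)
      ((p * f y ^ (p-1) * g y ^ q) • gradient f y
        + (q * f y ^ p * g y ^ (q-1)) • gradient g y) y := by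
  simpa using KS_hasGradientAt_CFpGq 1 p q hf hg hfy hgy

lemma KS_spatialDiv_congr {f g : E → E} {x : E} (h : f =ᶠ[nhds x] g) :
    spatialDiv n f x = spatialDiv n g x := by
  unfold spatialDiv; rw [h.fderiv_eq]

lemma KS_spatialDiv_two_smul (c₁ c₂ : E → ℝ) (w₁ w₂ : E → E) (g₁ g₂ : E) (x : E)
    (h₁ : HasGradientAt c₁ g₁ x) (h₂ : HasGradientAt c₂ g₂ x)
    (hw₁ : DifferentiableAt ℝ w₁ x) (hw₂ : DifferentiableAt ℝ w₂ x) :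
    spatialDiv n (fun y => c₁ y • w₁ y + c₂ y • w₂ y) x
      = ((inner ℝ g₁ (w₁ x) : ℝ) + c₁ x * spatialDiv n w₁ x)
        + ((inner ℝ g₂ (w₂ x) : ℝ) + c₂ x * spatialDiv n w₂ x) := by
  have H := (h₁.hasFDerivAt.smul hw₁.hasFDerivAt).add (h₂.hasFDerivAt.smul hw₂.hasFDerivAt)
  unfold spatialDiv
  rw [show (fun y => c₁ y • w₁ y + c₂ y • w₂ y) = c₁ • w₁ + c₂ • w₂ from rfl, H.fderiv]
  simp only [ContinuousLinearMap.add_apply, ContinuousLinearMap.smul_apply,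
    ContinuousLinearMap.smulRight_apply, toDual_apply_apply, PiLp.add_apply, PiLp.smul_apply,
    smul_eq_mul]
  have key : ∀ (g : E) (i : Fin n), (inner ℝ g (EuclideanSpace.single i (1:ℝ)) : ℝ) = g i := by
    intro g i
    rw [EuclideanSpace.inner_single_right]
    simp
  simp only [key]
  simp only [PiLp.inner_apply, RCLike.inner_apply, conj_trivial]
  rw [Finset.sum_add_distrib, Finset.sum_add_distrib, Finset.sum_add_distrib]
  rw [Finset.mul_sum, Finset.mul_sum]
  simp only [mul_comm (g₁.ofLp _) _, mul_comm (g₂.ofLp _) _]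
  ring

lemma KS_inner_comb (α β : ℝ) (P Q w : E) :
    (inner ℝ (α • P + β • Q) w : ℝ) = α * inner ℝ P w + β * inner ℝ Q w := by
  simp only [inner_add_left, real_inner_smul_left]

lemma KS_norm_comb (α β : ℝ) (P Q : E) :
    ‖α • P + β • Q‖ ^ 2
      = α^2 * (inner ℝ P P : ℝ) + 2*(α*β) * (inner ℝ P Q : ℝ) + β^2 * (inner ℝ Q Q : ℝ) := by
  rw [← real_inner_self_eq_norm_sq]
  simp only [inner_add_left, inner_add_right, real_inner_smul_left, real_inner_smul_right,
    real_inner_comm Q P]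
  ring

lemma KS_norm_smul (γ : ℝ) (Q : E) : ‖γ • Q‖ ^ 2 = γ^2 * (inner ℝ Q Q : ℝ) := by
  rw [← real_inner_self_eq_norm_sq]
  simp only [real_inner_smul_left, real_inner_smul_right]
  ring

noncomputable def KS_dualSymm (n : ℕ) :
    ((EuclideanSpace ℝ (Fin n)) →L[ℝ] ℝ) →L[ℝ] EuclideanSpace ℝ (Fin n) where
  toFun := fun φ => (toDual ℝ (EuclideanSpace ℝ (Fin n))).symm φ
  map_add' := fun φ ψ => map_add _ _ _
  map_smul' := fun r φ => by simp
  cont := (toDual ℝ (EuclideanSpace ℝ (Fin n))).symm.continuous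

lemma KS_gradient_diffAt {f : E → ℝ} {s : Set E} (hs : IsOpen s) {x : E} (hx : x ∈ s)
    (hf : ContDiffOn ℝ 2 f s) : DifferentiableAt ℝ (gradient f) x := by
  have h1 : ContDiffAt ℝ 1 (fderiv ℝ f) x :=
    (hf.contDiffAt (hs.mem_nhds hx)).fderiv_right (by norm_num)
  have h2 : DifferentiableAt ℝ (fderiv ℝ f) x := h1.differentiableAt one_ne_zero
  have heq : gradient f = fun y => KS_dualSymm n (fderiv ℝ f y) := rfl
  rw [heq]
  exact (KS_dualSymm n).differentiableAt.comp x h2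

end KShelpers

/-- The key pointwise evolution identity for the coupled quantity `u^{−a} v^{−b}`
along a classical solution of the regularized Keller–Segel system with logarithmic
sensitivity. Real powers are `Real.rpow`. -/
theorem evolution_identity_power (n : ℕ) (χ a b k : ℝ)
    (hχ : 0 < χ) (ha : 0 < a) (hb : 0 < b) (hk : 1 ≤ k)
    (Ω : Set (EuclideanSpace ℝ (Fin n))) (hΩ : IsOpen Ω)
    (t₁ t₂ : ℝ) (ht : t₁ < t₂)
    (u v : ℝ → EuclideanSpace ℝ (Fin n) → ℝ)
    (hupos : ∀ t ∈ Set.Ioo t₁ t₂, ∀ x ∈ Ω, 0 < u t x)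
    (hvpos : ∀ t ∈ Set.Ioo t₁ t₂, ∀ x ∈ Ω, 0 < v t x)
    (hutime : ∀ x ∈ Ω, ContDiffOn ℝ 1 (fun t => u t x) (Set.Ioo t₁ t₂))
    (hvtime : ∀ x ∈ Ω, ContDiffOn ℝ 1 (fun t => v t x) (Set.Ioo t₁ t₂))
    (huspace : ∀ t ∈ Set.Ioo t₁ t₂, ContDiffOn ℝ 2 (u t) Ω)
    (hvspace : ∀ t ∈ Set.Ioo t₁ t₂, ContDiffOn ℝ 2 (v t) Ω)
    (hueq : ∀ t ∈ Set.Ioo t₁ t₂, ∀ x ∈ Ω,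
      deriv (fun s => u s x) t
        = spatialDiv n
            (fun y => gradient (u t) y - (χ * (u t y / v t y)) • gradient (v t) y) x)
    (hveq : ∀ t ∈ Set.Ioo t₁ t₂, ∀ x ∈ Ω,
      deriv (fun s => v s x) t
        = spatialLaplacian n (v t) x - v t x + u t x / (1 + u t x / k)) :
    ∀ t ∈ Set.Ioo t₁ t₂, ∀ x ∈ Ω,
      deriv (fun s => u s x ^ (-a) * v s x ^ (-b)) t
        = -4 * (((a + 1) / a)
              * ‖gradient (fun y => u t y ^ (-(a / 2)) * v t y ^ (-(b / 2))) x‖ ^ 2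
            + (b / a + χ * (a + 1) / 2)
              * (inner ℝ (gradient (fun y => u t y ^ (-(a / 2)) * v t y ^ (-(b / 2))) x)
                  ((u t x ^ (-(a / 2)) * v t x ^ (-(b / 2) - 1)) • gradient (v t) x) : ℝ)
            + (1 / 4) * (b ^ 2 / a + b + χ * b)
              * ‖(u t x ^ (-(a / 2)) * v t x ^ (-(b / 2) - 1)) • gradient (v t) x‖ ^ 2)
          + spatialDiv n
              (fun y => gradient (fun z => u t z ^ (-a) * v t z ^ (-b)) y
                + (χ * a * (u t y ^ (-a) * v t y ^ (-b - 1))) • gradient (v t) y) x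
          + b * (u t x ^ (-a) * v t x ^ (-b))
          - b * (u t x ^ (-a + 1) / (1 + u t x / k)) * v t x ^ (-b - 1) := by
  intro t ht x hx
  have hU0 : 0 < u t x := hupos t ht x hx
  have hV0 : 0 < v t x := hvpos t ht x hx
  have hUne : u t x ≠ 0 := ne_of_gt hU0
  have hVne : v t x ≠ 0 := ne_of_gt hV0
  have hud : ∀ y ∈ Ω, DifferentiableAt ℝ (u t) y := fun y hy =>
    ((huspace t ht).contDiffAt (hΩ.mem_nhds hy)).differentiableAt two_ne_zero
  have hvd : ∀ y ∈ Ω, DifferentiableAt ℝ (v t) y := fun y hy =>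
    ((hvspace t ht).contDiffAt (hΩ.mem_nhds hy)).differentiableAt two_ne_zero
  have hPd : DifferentiableAt ℝ (gradient (u t)) x := KS_gradient_diffAt hΩ hx (huspace t ht)
  have hQd : DifferentiableAt ℝ (gradient (v t)) x := KS_gradient_diffAt hΩ hx (hvspace t ht)
  -- time derivative
  have hdu : HasDerivAt (fun s => u s x) (deriv (fun s => u s x) t) t :=
    (((hutime x hx).contDiffAt (isOpen_Ioo.mem_nhds ht)).differentiableAt one_ne_zero).hasDerivAt
  have hdv : HasDerivAt (fun s => v s x) (deriv (fun s => v s x) t) t :=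
    (((hvtime x hx).contDiffAt (isOpen_Ioo.mem_nhds ht)).differentiableAt one_ne_zero).hasDerivAt
  have hder : deriv (fun s => u s x ^ (-a) * v s x ^ (-b)) t
      = (deriv (fun s => u s x) t * -a * u t x ^ (-a - 1)) * v t x ^ (-b)
        + u t x ^ (-a) * (deriv (fun s => v s x) t * -b * v t x ^ (-b - 1)) :=
    HasDerivAt.deriv ((hdu.rpow_const (Or.inl hUne)).mul (hdv.rpow_const (Or.inl hVne)))
  -- divergence of the flux in the u-equation
  have hc1 : HasGradientAt (fun y => -χ * (u t y ^ (1:ℝ) * v t y ^ (-1:ℝ)))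
      ((-χ * (1 * u t x ^ ((1:ℝ)-1) * v t x ^ (-1:ℝ))) • gradient (u t) x
        + (-χ * ((-1) * u t x ^ (1:ℝ) * v t x ^ ((-1:ℝ)-1))) • gradient (v t) x) x :=
    KS_hasGradientAt_CFpGq (-χ) 1 (-1) (hud x hx) (hvd x hx) hUne hVne
  have e1 : (fun y => gradient (u t) y - (χ * (u t y / v t y)) • gradient (v t) y)
      = (fun y => (fun _ : EuclideanSpace ℝ (Fin n) => (1:ℝ)) y • gradient (u t) y
          + (-χ * (u t y ^ (1:ℝ) * v t y ^ (-1:ℝ))) • gradient (v t) y) := by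
    funext y
    rw [Real.rpow_one, Real.rpow_neg_one, one_smul, sub_eq_add_neg, ← neg_smul]
    congr 1
    congr 1
    rw [div_eq_mul_inv]; ring
  have hdiv1 := KS_spatialDiv_two_smul (fun _ => (1:ℝ))
    (fun y => -χ * (u t y ^ (1:ℝ) * v t y ^ (-1:ℝ)))
    (gradient (u t)) (gradient (v t)) 0 _ x (hasGradientAt_const x (1:ℝ)) hc1 hPd hQd
  rw [← e1] at hdiv1
  -- divergence of the flux on the right-hand side
  have hc2a : HasGradientAt (fun y => -a * (u t y ^ (-a + -1) * v t y ^ (-b)))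
      ((-a * ((-a + -1) * u t x ^ (-a + -1 - 1) * v t x ^ (-b))) • gradient (u t) x
        + (-a * ((-b) * u t x ^ (-a + -1) * v t x ^ (-b - 1))) • gradient (v t) x) x :=
    KS_hasGradientAt_CFpGq (-a) (-a + -1) (-b) (hud x hx) (hvd x hx) hUne hVne
  have hc2b : HasGradientAt (fun y => (χ * a - b) * (u t y ^ (-a) * v t y ^ (-b + -1)))
      (((χ * a - b) * ((-a) * u t x ^ (-a - 1) * v t x ^ (-b + -1))) • gradient (u t) x
        + ((χ * a - b) * ((-b + -1) * u t x ^ (-a) * v t x ^ (-b + -1 - 1))) • gradient (v t) x) x :=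
    KS_hasGradientAt_CFpGq (χ * a - b) (-a) (-b + -1) (hud x hx) (hvd x hx) hUne hVne
  have hdiv2 := KS_spatialDiv_two_smul
    (fun y => -a * (u t y ^ (-a + -1) * v t y ^ (-b)))
    (fun y => (χ * a - b) * (u t y ^ (-a) * v t y ^ (-b + -1)))
    (gradient (u t)) (gradient (v t)) _ _ x hc2a hc2b hPd hQd
  have e2 : (fun y => gradient (fun z => u t z ^ (-a) * v t z ^ (-b)) y
        + (χ * a * (u t y ^ (-a) * v t y ^ (-b - 1))) • gradient (v t) y)
      =ᶠ[nhds x] (fun y => (-a * (u t y ^ (-a + -1) * v t y ^ (-b))) • gradient (u t) y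
        + ((χ * a - b) * (u t y ^ (-a) * v t y ^ (-b + -1))) • gradient (v t) y) := by
    filter_upwards [hΩ.mem_nhds hx] with y hy
    have hUy : u t y ≠ 0 := ne_of_gt (hupos t ht y hy)
    have hVy : v t y ≠ 0 := ne_of_gt (hvpos t ht y hy)
    rw [(KS_hasGradientAt_FpGq (-a) (-b) (hud y hy) (hvd y hy) hUy hVy).gradient]
    rw [add_assoc, ← add_smul]
    congr 1
    · congr 1
      rw [show (-a + -1 : ℝ) = -a - 1 by ring]; ring
    · congr 1
      rw [show (-b + -1 : ℝ) = -b - 1 by ring]; ring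
  have hdiv2' := (KS_spatialDiv_congr e2).trans hdiv2
  -- gradient of the half-power quantity
  have hG := KS_hasGradientAt_FpGq (-(a/2)) (-(b/2)) (hud x hx) (hvd x hx) hUne hVne
  -- rewrite everything
  rw [hder, hueq t ht x hx, hveq t ht x hx,
    show spatialLaplacian n (v t) x = spatialDiv n (gradient (v t)) x from rfl,
    hdiv1, hdiv2', hG.gradient]
  rw [KS_norm_comb, real_inner_smul_right, KS_inner_comb, KS_norm_smul,
    KS_inner_comb, KS_inner_comb, KS_inner_comb, inner_zero_left,
    real_inner_comm (gradient (v t) x) (gradient (u t) x)]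
  -- power conversions
  have hUa : u t x ^ (-a) = u t x ^ (-(a/2)) * u t x ^ (-(a/2)) := by
    rw [show (-a : ℝ) = (-(a/2)) + (-(a/2)) by ring, Real.rpow_add hU0]
  have hUa1 : u t x ^ (-a - 1) = u t x ^ (-(a/2)) * u t x ^ (-(a/2)) * (u t x)⁻¹ := by
    rw [show (-a - 1 : ℝ) = (-(a/2)) + (-(a/2)) + (-1) by ring, Real.rpow_add hU0,
      Real.rpow_add hU0, Real.rpow_neg_one]
  have hUa1' : u t x ^ (-a + -1) = u t x ^ (-(a/2)) * u t x ^ (-(a/2)) * (u t x)⁻¹ := by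
    rw [show (-a + -1 : ℝ) = -a - 1 by ring]; exact hUa1
  have hUa2 : u t x ^ (-a + -1 - 1)
      = u t x ^ (-(a/2)) * u t x ^ (-(a/2)) * (u t x)⁻¹ * (u t x)⁻¹ := by
    rw [show (-a + -1 - 1 : ℝ) = ((-(a/2)) + (-(a/2)) + (-1)) + (-1) by ring,
      Real.rpow_add hU0, Real.rpow_add hU0, Real.rpow_add hU0, Real.rpow_neg_one]
  have hUha1 : u t x ^ (-(a/2) - 1) = u t x ^ (-(a/2)) * (u t x)⁻¹ := by
    rw [show (-(a/2) - 1 : ℝ) = (-(a/2)) + (-1) by ring, Real.rpow_add hU0, Real.rpow_neg_one]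
  have hUap1 : u t x ^ (-a + 1) = u t x ^ (-(a/2)) * u t x ^ (-(a/2)) * u t x := by
    rw [show (-a + 1 : ℝ) = ((-(a/2)) + (-(a/2))) + 1 by ring, Real.rpow_add hU0,
      Real.rpow_add hU0, Real.rpow_one]
  have hU10 : u t x ^ ((1:ℝ) - 1) = 1 := by norm_num
  have hU11 : u t x ^ (1:ℝ) = u t x := Real.rpow_one _
  have hVb : v t x ^ (-b) = v t x ^ (-(b/2)) * v t x ^ (-(b/2)) := by
    rw [show (-b : ℝ) = (-(b/2)) + (-(b/2)) by ring, Real.rpow_add hV0]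
  have hVb1 : v t x ^ (-b - 1) = v t x ^ (-(b/2)) * v t x ^ (-(b/2)) * (v t x)⁻¹ := by
    rw [show (-b - 1 : ℝ) = (-(b/2)) + (-(b/2)) + (-1) by ring, Real.rpow_add hV0,
      Real.rpow_add hV0, Real.rpow_neg_one]
  have hVb1' : v t x ^ (-b + -1) = v t x ^ (-(b/2)) * v t x ^ (-(b/2)) * (v t x)⁻¹ := by
    rw [show (-b + -1 : ℝ) = -b - 1 by ring]; exact hVb1
  have hVb2 : v t x ^ (-b + -1 - 1)
      = v t x ^ (-(b/2)) * v t x ^ (-(b/2)) * (v t x)⁻¹ * (v t x)⁻¹ := by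
    rw [show (-b + -1 - 1 : ℝ) = ((-(b/2)) + (-(b/2)) + (-1)) + (-1) by ring,
      Real.rpow_add hV0, Real.rpow_add hV0, Real.rpow_add hV0, Real.rpow_neg_one]
  have hVhb1 : v t x ^ (-(b/2) - 1) = v t x ^ (-(b/2)) * (v t x)⁻¹ := by
    rw [show (-(b/2) - 1 : ℝ) = (-(b/2)) + (-1) by ring, Real.rpow_add hV0, Real.rpow_neg_one]
  have hVm1 : v t x ^ (-1:ℝ) = (v t x)⁻¹ := Real.rpow_neg_one _
  have hVm2 : v t x ^ ((-1:ℝ) - 1) = (v t x)⁻¹ * (v t x)⁻¹ := by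
    rw [show ((-1:ℝ) - 1 : ℝ) = (-1) + (-1) by ring, Real.rpow_add hV0,
      Real.rpow_neg_one]
  beta_reduce
  simp only [hUa1, hUa1', hUa2, hUha1, hUap1, hU10, hU11, hUa,
    hVb1, hVb1', hVb2, hVhb1, hVm1, hVm2, hVb]
  have hk0 : (0:ℝ) < k := lt_of_lt_of_le one_pos hk
  have hden : (1 : ℝ) + u t x / k ≠ 0 := by positivity
  field_simp
  ring
end
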